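/- arXiv:1903.10598 — 4 statements merged into one kernel-verified Lean document; each statement's English description precedes it below -/
import Mathlib

section
/- Let (Ω, 𝒜, ℙ) be a probability space, let 𝒴 be a finite nonempty set, let 𝒳ₚ be a finite nonempty set, and let Y : Ω → 𝒴, Ỹ : Ω → 𝒴 and Xₚ : Ω → 𝒳ₚ be measurable maps. Suppose: (i) for every y ∈ 𝒴 and every xₚ ∈ 𝒳ₚ with ℙ(Xₚ = xₚ) > 0, ℙ(Y = y | Xₚ = xₚ) = ℙ(Y = y) (the true decision process does not suffer from disparate impact); and (ii) for every ỹ, y ∈ 𝒴 and every xₚ ∈ 𝒳ₚ with ℙ(Y = y ∩ Xₚ = xₚ) > 0, ℙ(Ỹ = ỹ | Y = y ∩ Xₚ = xₚ) = ℙ(Ỹ = ỹ | Y = y) (the learned classifier does not suffer from disparate mistreatment). Then the learned classifier does not suffer from disparate impact: for every ỹ ∈ 𝒴 and every xₚ ∈ 𝒳ₚ with ℙ(Xₚ = xₚ) > 0, ℙ(Ỹ = ỹ | Xₚ = xₚ) = ℙ(Ỹ = ỹ). (In case (ii) is vacuous for some y because ℙ(Y = y ∩ Xₚ = xₚ) =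 0, note that by (i) this forces ℙ(Y = y) = 0, so that term does not contribute.) -/
/-!
Split the event `{Ỹ = ỹ} ∩ {Xₚ = xₚ}` along the fibres of `Y`. On the fibre `{Y = y}`, no disparate
impact factors `ℙ(Y = y, Xₚ = xₚ)` as `ℙ(Y = y) ℙ(Xₚ = xₚ)`, and no disparate mistreatment then
turns `ℙ(Ỹ = ỹ, Y = y, Xₚ = xₚ)` into `ℙ(Ỹ = ỹ, Y = y) ℙ(Xₚ = xₚ)` (both sides vanish when
`ℙ(Y = y, Xₚ = xₚ) = 0`). Summing over `y` gives `ℙ(Ỹ = ỹ, Xₚ = xₚ) = ℙ(Ỹ = ỹ) ℙ(Xₚ = xₚ)`.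
-/

open MeasureTheory

section

variable {Ω : Type*} [MeasurableSpace Ω] {μ : Measure Ω}

theorem measure_eq_sum_measure_preimage_singleton_inter {β : Type*} [Fintype β]
    [MeasurableSpace β] [MeasurableSingletonClass β] {f : Ω → β} (hf : Measurable f)
    (T : Set Ω) : μ T = ∑ y, μ (f ⁻¹' {y} ∩ T) := by
  calc μ T = μ.restrict T (f ⁻¹' (Finset.univ : Finset β)) := by simp
    _ = ∑ y, μ.restrict T (f ⁻¹' {y}) :=
      (sum_measure_preimage_singleton _ fun y _ => hf (measurableSet_singleton y)).symm
    _ = ∑ y, μ (f ⁻¹' {y} ∩ T) := by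
      simp only [Measure.restrict_apply (hf (measurableSet_singleton _))]

theorem ENNReal.div_eq_iff_eq_mul {a b c : ENNReal} (ha : a ≠ 0) (ha' : a ≠ ⊤) :
    b / a = c ↔ b = c * a := by
  rw [eq_comm, ENNReal.eq_div_iff ha ha', mul_comm, eq_comm]

theorem measure_inter_inter_eq_mul [IsFiniteMeasure μ] {A S B : Set Ω}
    (hSB : μ (S ∩ B) = μ S * μ B)
    (hcond : 0 < μ (S ∩ B) → μ (A ∩ (S ∩ B)) / μ (S ∩ B) = μ (A ∩ S) / μ S) :
    μ (A ∩ (S ∩ B)) = μ (A ∩ S) * μ B := by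
  rcases eq_or_ne (μ (S ∩ B)) 0 with hSB0 | hSB0
  · have hA : μ (A ∩ (S ∩ B)) = 0 := measure_mono_null Set.inter_subset_right hSB0
    rcases mul_eq_zero.1 (hSB ▸ hSB0) with hS0 | hB0
    · rw [hA, measure_mono_null Set.inter_subset_right hS0, zero_mul]
    · rw [hA, hB0, mul_zero]
  · have hS0 : μ S ≠ 0 := left_ne_zero_of_mul (hSB ▸ hSB0)
    calc μ (A ∩ (S ∩ B)) = μ (A ∩ S) / μ S * μ (S ∩ B) :=
          (ENNReal.div_eq_iff_eq_mul hSB0 (measure_ne_top _ _)).1 (hcond (pos_iff_ne_zero.2 hSB0))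
      _ = μ (A ∩ S) * μ B := by
        rw [hSB, ← mul_assoc, ENNReal.div_mul_cancel hS0 (measure_ne_top _ _)]

end

theorem learned_classifier_no_disparate_impact_general
    {Ω 𝒴 𝒳p : Type*} [MeasurableSpace Ω]
    [Fintype 𝒴] [MeasurableSpace 𝒴] [MeasurableSingletonClass 𝒴]
    (μ : Measure Ω) [IsProbabilityMeasure μ]
    (Y Yt : Ω → 𝒴) (Xp : Ω → 𝒳p)
    (hY : Measurable Y)
    -- (i) the true process does not suffer from disparate impact
    (h1 : ∀ (y : 𝒴) (xp : 𝒳p), 0 < μ {ω | Xp ω = xp} →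
      μ ({ω | Y ω = y} ∩ {ω | Xp ω = xp}) / μ {ω | Xp ω = xp} = μ {ω | Y ω = y})
    -- (ii) the learned classifier does not suffer from disparate mistreatment
    (h2 : ∀ (yt y : 𝒴) (xp : 𝒳p), 0 < μ ({ω | Y ω = y} ∩ {ω | Xp ω = xp}) →
      μ ({ω | Yt ω = yt} ∩ ({ω | Y ω = y} ∩ {ω | Xp ω = xp})) /
          μ ({ω | Y ω = y} ∩ {ω | Xp ω = xp})
        = μ ({ω | Yt ω = yt} ∩ {ω | Y ω = y}) / μ {ω | Y ω = y}) :
    -- conclusion: the learned classifier does not suffer from disparate impact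
    ∀ (yt : 𝒴) (xp : 𝒳p), 0 < μ {ω | Xp ω = xp} →
      μ ({ω | Yt ω = yt} ∩ {ω | Xp ω = xp}) / μ {ω | Xp ω = xp} = μ {ω | Yt ω = yt} := by
  intro yt xp hxp
  set A := {ω | Yt ω = yt}
  set B := {ω | Xp ω = xp}
  have hB0 : μ B ≠ 0 := hxp.ne'
  have hY_indep : ∀ y, μ ({ω | Y ω = y} ∩ B) = μ {ω | Y ω = y} * μ B := fun y =>
    (ENNReal.div_eq_iff_eq_mul hB0 (measure_ne_top _ _)).1 (h1 y xp hxp)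
  have hA_indep : μ (A ∩ B) = μ A * μ B :=
    calc μ (A ∩ B) = ∑ y, μ (A ∩ ({ω | Y ω = y} ∩ B)) := by
          rw [measure_eq_sum_measure_preimage_singleton_inter hY]
          simp_rw [Set.inter_left_comm]
          rfl
      _ = ∑ y, μ (A ∩ {ω | Y ω = y}) * μ B :=
          Finset.sum_congr rfl fun y _ => measure_inter_inter_eq_mul (hY_indep y) (h2 yt y xp)
      _ = μ A * μ B := by
          rw [← Finset.sum_mul, measure_eq_sum_measure_preimage_singleton_inter hY A]
          simp_rw [Set.inter_comm]
          rfl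
  exact (ENNReal.div_eq_iff_eq_mul hB0 (measure_ne_top _ _)).2 hA_indep

/-- **Proposition 1 (paper).** If the true decision process `Y` does not suffer from
disparate impact relative to the protected attribute `Xp`, and the learned classifier
`Yt` does not suffer from disparate mistreatment (its conditional misclassification
probabilities given the true label do not change after observing `Xp`), then the
learned classifier does not suffer from disparate impact. Conditional probabilities
`ℙ(A|B) = ℙ(A ∩ B)/ℙ(B)` are written out explicitly. -/
theorem learned_classifier_no_disparate_impact
    {Ω 𝒴 𝒳p : Type*} [MeasurableSpace Ω]
    [Fintype 𝒴] [Nonempty 𝒴] [MeasurableSpace 𝒴] [MeasurableSingletonClass 𝒴]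
    [Fintype 𝒳p] [Nonempty 𝒳p] [MeasurableSpace 𝒳p] [MeasurableSingletonClass 𝒳p]
    (μ : Measure Ω) [IsProbabilityMeasure μ]
    (Y Yt : Ω → 𝒴) (Xp : Ω → 𝒳p)
    (hY : Measurable Y) (hYt : Measurable Yt) (hXp : Measurable Xp)
    -- (i) the true process does not suffer from disparate impact
    (h1 : ∀ (y : 𝒴) (xp : 𝒳p), 0 < μ {ω | Xp ω = xp} →
      μ ({ω | Y ω = y} ∩ {ω | Xp ω = xp}) / μ {ω | Xp ω = xp} = μ {ω | Y ω = y})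
    -- (ii) the learned classifier does not suffer from disparate mistreatment
    (h2 : ∀ (yt y : 𝒴) (xp : 𝒳p), 0 < μ ({ω | Y ω = y} ∩ {ω | Xp ω = xp}) →
      μ ({ω | Yt ω = yt} ∩ ({ω | Y ω = y} ∩ {ω | Xp ω = xp})) /
          μ ({ω | Y ω = y} ∩ {ω | Xp ω = xp})
        = μ ({ω | Yt ω = yt} ∩ {ω | Y ω = y}) / μ {ω | Y ω = y}) :
    -- conclusion: the learned classifier does not suffer from disparate impact
    ∀ (yt : 𝒴) (xp : 𝒳p), 0 < μ {ω | Xp ω = xp} →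
      μ ({ω | Yt ω = yt} ∩ {ω | Xp ω = xp}) / μ {ω | Xp ω = xp} = μ {ω | Yt ω = yt} :=
  learned_classifier_no_disparate_impact_general μ Y Yt Xp hY h1 h2
end

section
/- Let (Ω, 𝒜, ℙ) be a probability space, let A ∈ 𝒜 and C ∈ 𝒜 be events with ℙ(C) > 0, and let (B_y)_{y ∈ I} be a finite measurable partition of Ω indexed by a finite set I. Suppose that for every y ∈ I: (i) ℙ(B_y | C) = ℙ(B_y), and (ii) whenever ℙ(B_y ∩ C) > 0, ℙ(A | B_y ∩ C) = ℙ(A | B_y). Then ℙ(A | C) = ℙ(A). (Here if ℙ(B_y ∩ C) = 0 then by (i) also ℙ(B_y) = 0, so the corresponding term in the law of total probability vanishes on both sides.) -/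
open MeasureTheory

/-- Abstract event-level form of Proposition 1 of the paper. Given an event `C`
with positive probability and a finite measurable partition `(B y)_{y ∈ I}` of `Ω`
such that each `B y` is independent of `C` in the conditional-probability sense
(`ℙ(B_y | C) = ℙ(B_y)`), and such that `ℙ(A | B_y ∩ C) = ℙ(A | B_y)` whenever
`ℙ(B_y ∩ C) > 0`, we have `ℙ(A | C) = ℙ(A)`. -/
theorem cond_prob_partition
    {Ω I : Type*} [MeasurableSpace Ω] [Fintype I]
    (μ : Measure Ω) [IsProbabilityMeasure μ]
    (A C : Set Ω) (hA : MeasurableSet A) (hC : MeasurableSet C) (hCpos : 0 < μ C)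
    (B : I → Set Ω) (hBmeas : ∀ y, MeasurableSet (B y))
    (hBdisj : Pairwise (Function.onFun Disjoint B))
    (hBcover : ⋃ y, B y = Set.univ)
    (h1 : ∀ y, μ (B y ∩ C) / μ C = μ (B y))
    (h2 : ∀ y, 0 < μ (B y ∩ C) →
      μ (A ∩ (B y ∩ C)) / μ (B y ∩ C) = μ (A ∩ B y) / μ (B y)) :
    μ (A ∩ C) / μ C = μ A := by
  have hCne : μ C ≠ 0 := hCpos.ne'
  have hCfin : μ C ≠ ⊤ := measure_ne_top μ C
  have key : ∀ y, μ (A ∩ (B y ∩ C)) / μ C = μ (A ∩ B y) := by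
    intro y
    by_cases h : μ (B y ∩ C) = 0
    · have hB0 : μ (B y) = 0 := by rw [← h1 y, h, ENNReal.zero_div]
      have h01 : μ (A ∩ (B y ∩ C)) = 0 :=
        measure_mono_null Set.inter_subset_right h
      have h02 : μ (A ∩ B y) = 0 :=
        measure_mono_null Set.inter_subset_right hB0
      rw [h01, h02, ENNReal.zero_div]
    · have hfin : μ (B y ∩ C) ≠ ⊤ := measure_ne_top _ _
      have hBne : μ (B y) ≠ 0 := by
        rw [← h1 y]
        simp [ENNReal.div_eq_zero_iff, h, hCfin]
      have hBfin : μ (B y) ≠ ⊤ := measure_ne_top _ _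
      calc μ (A ∩ (B y ∩ C)) / μ C
          = (μ (A ∩ (B y ∩ C)) / μ (B y ∩ C)) * μ (B y ∩ C) / μ C := by
            rw [ENNReal.div_mul_cancel h hfin]
        _ = (μ (A ∩ B y) / μ (B y)) * (μ (B y ∩ C) / μ C) := by
            rw [h2 y (pos_iff_ne_zero.mpr h), mul_div_assoc]
        _ = (μ (A ∩ B y) / μ (B y)) * μ (B y) := by rw [h1 y]
        _ = μ (A ∩ B y) := ENNReal.div_mul_cancel hBne hBfin
  have hsum1 : μ (A ∩ C) = ∑ y, μ (A ∩ (B y ∩ C)) := by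
    have : A ∩ C = ⋃ y, A ∩ (B y ∩ C) := by
      rw [← Set.inter_iUnion]
      congr 1
      rw [← Set.iUnion_inter, hBcover, Set.univ_inter]
    rw [this, measure_iUnion ?_ (fun y => hA.inter ((hBmeas y).inter hC)),
      tsum_fintype]
    intro i j hij
    exact (hBdisj hij).mono
      (Set.inter_subset_right.trans Set.inter_subset_left)
      (Set.inter_subset_right.trans Set.inter_subset_left)
  have hsum2 : μ A = ∑ y, μ (A ∩ B y) := by
    have : A = ⋃ y, A ∩ B y := by
      rw [← Set.inter_iUnion, hBcover, Set.inter_univ]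
    conv_lhs => rw [this]
    rw [measure_iUnion ?_ (fun y => hA.inter (hBmeas y)), tsum_fintype]
    intro i j hij
    exact (hBdisj hij).mono Set.inter_subset_right Set.inter_subset_right
  rw [hsum1, hsum2]
  simp only [div_eq_mul_inv, Finset.sum_mul]
  exact Finset.sum_congr rfl fun y _ => key y
end

section
/- Let (Ω, 𝒜, ℙ) be a probability space, let 𝒴 and 𝒳ₚ be finite nonempty sets, and let Y : Ω → 𝒴, Ỹ : Ω → 𝒴, Xₚ : Ω → 𝒳ₚ be measurable maps. Suppose: (i) Y and Xₚ are independent, i.e., ℙ(Y = y ∩ Xₚ = xₚ) = ℙ(Y = y)·ℙ(Xₚ = xₚ) for all y ∈ 𝒴, xₚ ∈ 𝒳ₚ; and (ii) Ỹ and Xₚ are conditionally independent given Y, i.e., ℙ(Ỹ = ỹ ∩ Xₚ = xₚ ∩ Y = y)·ℙ(Y = y) = ℙ(Ỹ = ỹ ∩ Y = y)·ℙ(Xₚ = xₚ ∩ Y = y) for all ỹ, y ∈ 𝒴, xₚ ∈ 𝒳ₚ. Then Ỹ and Xₚ are independent: ℙ(Ỹ = ỹ ∩ Xₚ = xₚ)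 = ℙ(Ỹ = ỹ)·ℙ(Xₚ = xₚ) for all ỹ ∈ 𝒴 and xₚ ∈ 𝒳ₚ. -/
/-!
Decompose `{Yt = yt} ∩ {Xp = xp}` along the fibres of `Y`. On each fibre, conditional
independence combined with the independence of `Y` and `Xp` factors out `μ {Xp = xp}`;
summing over the fibres reassembles `μ {Yt = yt}`.
-/

open MeasureTheory

theorem MeasureTheory.measure_eq_sum_measure_inter_fiber {Ω β : Type*} [MeasurableSpace Ω]
    [Fintype β] [MeasurableSpace β] [MeasurableSingletonClass β] (μ : Measure Ω) {f : Ω → β}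
    (hf : Measurable f) (s : Set Ω) : μ s = ∑ b, μ (s ∩ {ω | f ω = b}) := by
  have hfiber (b : β) : MeasurableSet (f ⁻¹' {b}) := hf (measurableSet_singleton b)
  calc μ s = μ.restrict s (f ⁻¹' ↑(Finset.univ : Finset β)) := by simp
    _ = ∑ b, μ (s ∩ {ω | f ω = b}) := by
      rw [← sum_measure_preimage_singleton _ fun b _ ↦ hfiber b]
      simp only [Measure.restrict_apply (hfiber _), Set.inter_comm]
      rfl

theorem MeasureTheory.measure_inter_inter_eq_mul_of_condIndep {Ω : Type*} [MeasurableSpace Ω]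
    {μ : Measure Ω} {A B C : Set Ω} (hC : μ C ≠ ⊤) (hBC : μ (B ∩ C) = μ B * μ C)
    (hABC : μ (A ∩ B ∩ C) * μ C = μ (A ∩ C) * μ (B ∩ C)) :
    μ (A ∩ B ∩ C) = μ (A ∩ C) * μ B := by
  rcases eq_or_ne (μ C) 0 with hC₀ | hC₀
  · rw [measure_mono_null Set.inter_subset_right hC₀,
      measure_mono_null Set.inter_subset_right hC₀, zero_mul]
  · rwa [hBC, ← mul_assoc, ENNReal.mul_left_inj hC₀ hC] at hABC

theorem indep_of_condIndep_general
    {Ω 𝒴 𝒳p : Type*} [MeasurableSpace Ω]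
    [Fintype 𝒴] [MeasurableSpace 𝒴] [MeasurableSingletonClass 𝒴]
    (μ : Measure Ω) [IsProbabilityMeasure μ]
    (Y Yt : Ω → 𝒴) (Xp : Ω → 𝒳p)
    (hY : Measurable Y)
    -- (i) Y and Xp are independent
    (h1 : ∀ (y : 𝒴) (xp : 𝒳p),
      μ ({ω | Y ω = y} ∩ {ω | Xp ω = xp}) = μ {ω | Y ω = y} * μ {ω | Xp ω = xp})
    -- (ii) Yt and Xp are conditionally independent given Y
    (h2 : ∀ (yt y : 𝒴) (xp : 𝒳p),
      μ ({ω | Yt ω = yt} ∩ {ω | Xp ω = xp} ∩ {ω | Y ω = y}) * μ {ω | Y ω = y}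
        = μ ({ω | Yt ω = yt} ∩ {ω | Y ω = y}) * μ ({ω | Xp ω = xp} ∩ {ω | Y ω = y})) :
    -- conclusion: Yt and Xp are independent
    ∀ (yt : 𝒴) (xp : 𝒳p),
      μ ({ω | Yt ω = yt} ∩ {ω | Xp ω = xp}) = μ {ω | Yt ω = yt} * μ {ω | Xp ω = xp} := by
  intro yt xp
  have hsplit (y : 𝒴) : μ ({ω | Yt ω = yt} ∩ {ω | Xp ω = xp} ∩ {ω | Y ω = y})
      = μ ({ω | Yt ω = yt} ∩ {ω | Y ω = y}) * μ {ω | Xp ω = xp} :=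
    measure_inter_inter_eq_mul_of_condIndep (measure_ne_top μ _)
      (by rw [Set.inter_comm, h1, mul_comm]) (h2 yt y xp)
  rw [measure_eq_sum_measure_inter_fiber μ hY,
    measure_eq_sum_measure_inter_fiber μ hY {ω | Yt ω = yt}, Finset.sum_mul]
  exact Finset.sum_congr rfl fun y _ ↦ hsplit y

/-- Measure-theoretic restatement of Proposition 1 of the paper: if the true label
`Y` is independent of the protected attribute `Xp`, and the learned prediction `Yt`
is conditionally independent of `Xp` given `Y` (stated in the product form avoiding
division), then `Yt` is independent of `Xp`. -/
theorem indep_of_condIndep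
    {Ω 𝒴 𝒳p : Type*} [MeasurableSpace Ω]
    [Fintype 𝒴] [Nonempty 𝒴] [MeasurableSpace 𝒴] [MeasurableSingletonClass 𝒴]
    [Fintype 𝒳p] [Nonempty 𝒳p] [MeasurableSpace 𝒳p] [MeasurableSingletonClass 𝒳p]
    (μ : Measure Ω) [IsProbabilityMeasure μ]
    (Y Yt : Ω → 𝒴) (Xp : Ω → 𝒳p)
    (hY : Measurable Y) (hYt : Measurable Yt) (hXp : Measurable Xp)
    -- (i) Y and Xp are independent
    (h1 : ∀ (y : 𝒴) (xp : 𝒳p),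
      μ ({ω | Y ω = y} ∩ {ω | Xp ω = xp}) = μ {ω | Y ω = y} * μ {ω | Xp ω = xp})
    -- (ii) Yt and Xp are conditionally independent given Y
    (h2 : ∀ (yt y : 𝒴) (xp : 𝒳p),
      μ ({ω | Yt ω = yt} ∩ {ω | Xp ω = xp} ∩ {ω | Y ω = y}) * μ {ω | Y ω = y}
        = μ ({ω | Yt ω = yt} ∩ {ω | Y ω = y}) * μ ({ω | Xp ω = xp} ∩ {ω | Y ω = y})) :
    -- conclusion: Yt and Xp are independent
    ∀ (yt : 𝒴) (xp : 𝒳p),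
      μ ({ω | Yt ω = yt} ∩ {ω | Xp ω = xp}) = μ {ω | Yt ω = yt} * μ {ω | Xp ω = xp} :=
  indep_of_condIndep_general μ Y Yt Xp hY h1 h2
end

section
/- Let (Ω, 𝒜, ℙ) be a probability space, let 𝒴 and 𝒳ₚ be finite nonempty sets, and let Y : Ω → 𝒴, Ỹ : Ω → 𝒴, Xₚ : Ω → 𝒳ₚ be measurable maps. Fix xₚ ∈ 𝒳ₚ with ℙ(Xₚ = xₚ) > 0 and fix ỹ ∈ 𝒴. Suppose that for every y ∈ 𝒴: (i) ℙ(Y = y | Xₚ = xₚ) = ℙ(Y = y), and (ii) whenever ℙ(Y = y ∩ Xₚ = xₚ) > 0, ℙ(Ỹ = ỹ | Y = y ∩ Xₚ = xₚ) = ℙ(Ỹ = ỹ | Y = y). Then Σ_{y ∈ 𝒴} ℙ(Ỹ = ỹ | Y = y ∩ Xₚ = xₚ)·ℙ(Y = y | Xₚ = xₚ) = ℙ(Ỹ = ỹ | Xₚ = xₚ), and this common value equals Σ_{y ∈ 𝒴, ℙ(Y = y) > 0} ℙ(Ỹ = ỹ | Y = y)·ℙ(Y = y) = ℙ(Ỹ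 = ỹ) (where in the first sum the terms with ℙ(Y = y ∩ Xₚ = xₚ) = 0 vanish because by (i) they have ℙ(Y = y | Xₚ = xₚ) = 0). -/
open MeasureTheory
open scoped Classical

/-! Both sums are the law of total probability over the fibres of `Y`, once conditioned on
`Xp = xp` and once not; hypotheses (i) and (ii) identify them summand by summand. In `ℝ≥0∞`
a fibre of measure zero contributes `0 / 0 * 0 = 0` to either sum. -/

protected lemma ENNReal.div_mul_div_cancel' {a b c : ENNReal} (hb₀ : b = 0 → a = 0)
    (hb : b = ⊤ → a = 0) : a / b * (b / c) = a / c := by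
  rw [← mul_div_assoc, ENNReal.div_mul_cancel' hb₀ hb]

section Fibers

variable {Ω β : Type*} [MeasurableSpace Ω] [MeasurableSpace β] [MeasurableSingletonClass β]
  [Fintype β] {f : Ω → β}

lemma measure_eq_sum_measure_fiber_inter (hf : Measurable f) (μ : Measure Ω) (s : Set Ω) :
    μ s = ∑ y, μ ({ω | f ω = y} ∩ s) := by
  calc μ s = μ.restrict s Set.univ := (Measure.restrict_apply_univ s).symm
    _ = ∑ y, μ.restrict s (f ⁻¹' {y}) := by
      rw [sum_measure_preimage_singleton _ fun y _ => hf (measurableSet_singleton y)]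
      simp
    _ = ∑ y, μ ({ω | f ω = y} ∩ s) := by
      simp only [Measure.restrict_apply (hf (measurableSet_singleton _))]
      rfl

variable (μ : Measure Ω) [IsFiniteMeasure μ]

lemma sum_measure_inter_fiber_div_mul_div (hf : Measurable f) (t s : Set Ω) :
    ∑ y, μ (t ∩ ({ω | f ω = y} ∩ s)) / μ ({ω | f ω = y} ∩ s) * (μ ({ω | f ω = y} ∩ s) / μ s)
      = μ (t ∩ s) / μ s := by
  have hcancel : ∀ y, μ (t ∩ ({ω | f ω = y} ∩ s)) / μ ({ω | f ω = y} ∩ s)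
      * (μ ({ω | f ω = y} ∩ s) / μ s) = μ (t ∩ ({ω | f ω = y} ∩ s)) / μ s := fun y =>
    ENNReal.div_mul_div_cancel' (fun h => measure_mono_null Set.inter_subset_right h)
      (fun h => absurd h (measure_ne_top μ _))
  rw [Finset.sum_congr rfl fun y _ => hcancel y, measure_eq_sum_measure_fiber_inter hf μ (t ∩ s)]
  simp only [div_eq_mul_inv, ← Finset.sum_mul, Set.inter_left_comm t]

lemma sum_measure_inter_fiber_div_mul (hf : Measurable f) (t : Set Ω) :
    ∑ y, μ (t ∩ {ω | f ω = y}) / μ {ω | f ω = y} * μ {ω | f ω = y} = μ t := by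
  have hcancel : ∀ y, μ (t ∩ {ω | f ω = y}) / μ {ω | f ω = y} * μ {ω | f ω = y}
      = μ ({ω | f ω = y} ∩ t) := fun y => by
    rw [Set.inter_comm]
    exact ENNReal.div_mul_cancel' (fun h => measure_mono_null Set.inter_subset_left h)
      (fun h => absurd h (measure_ne_top μ _))
  rw [Finset.sum_congr rfl fun y _ => hcancel y]
  exact (measure_eq_sum_measure_fiber_inter hf μ t).symm

end Fibers

lemma measure_inter_div_mul_div_eq_of_cond_eq {Ω : Type*} [MeasurableSpace Ω]
    (μ : Measure Ω) {t b s : Set Ω} (hb : μ (b ∩ s) / μ s = μ b)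
    (ht : 0 < μ (b ∩ s) → μ (t ∩ (b ∩ s)) / μ (b ∩ s) = μ (t ∩ b) / μ b) :
    μ (t ∩ (b ∩ s)) / μ (b ∩ s) * (μ (b ∩ s) / μ s) = μ (t ∩ b) / μ b * μ b := by
  rcases eq_zero_or_pos (μ (b ∩ s)) with hbs | hbs
  · have hb₀ : μ b = 0 := by rw [← hb, hbs, ENNReal.zero_div]
    rw [hbs, hb₀, measure_mono_null Set.inter_subset_right hbs]
    simp
  · rw [ht hbs, hb]

theorem total_probability_chain_general
    {Ω 𝒴 𝒳p : Type*} [MeasurableSpace Ω]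
    [Fintype 𝒴] [MeasurableSpace 𝒴] [MeasurableSingletonClass 𝒴]
    (μ : Measure Ω) [IsProbabilityMeasure μ]
    (Y Yt : Ω → 𝒴) (Xp : Ω → 𝒳p)
    (hY : Measurable Y)
    (xp : 𝒳p) (yt : 𝒴)
    -- (i) no disparate impact of the true labels
    (h1 : ∀ y : 𝒴,
      μ ({ω | Y ω = y} ∩ {ω | Xp ω = xp}) / μ {ω | Xp ω = xp} = μ {ω | Y ω = y})
    -- (ii) no disparate mistreatment of the classifier
    (h2 : ∀ y : 𝒴, 0 < μ ({ω | Y ω = y} ∩ {ω | Xp ω = xp}) →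
      μ ({ω | Yt ω = yt} ∩ ({ω | Y ω = y} ∩ {ω | Xp ω = xp})) /
          μ ({ω | Y ω = y} ∩ {ω | Xp ω = xp})
        = μ ({ω | Yt ω = yt} ∩ {ω | Y ω = y}) / μ {ω | Y ω = y}) :
    (∑ y : 𝒴,
        (μ ({ω | Yt ω = yt} ∩ ({ω | Y ω = y} ∩ {ω | Xp ω = xp})) /
            μ ({ω | Y ω = y} ∩ {ω | Xp ω = xp})) *
          (μ ({ω | Y ω = y} ∩ {ω | Xp ω = xp}) / μ {ω | Xp ω = xp})
      = μ ({ω | Yt ω = yt} ∩ {ω | Xp ω = xp}) / μ {ω | Xp ω = xp})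
    ∧ (μ ({ω | Yt ω = yt} ∩ {ω | Xp ω = xp}) / μ {ω | Xp ω = xp}
      = ∑ y ∈ Finset.univ.filter (fun y : 𝒴 => 0 < μ {ω | Y ω = y}),
          (μ ({ω | Yt ω = yt} ∩ {ω | Y ω = y}) / μ {ω | Y ω = y}) * μ {ω | Y ω = y})
    ∧ (∑ y ∈ Finset.univ.filter (fun y : 𝒴 => 0 < μ {ω | Y ω = y}),
          (μ ({ω | Yt ω = yt} ∩ {ω | Y ω = y}) / μ {ω | Y ω = y}) * μ {ω | Y ω = y}
      = μ {ω | Yt ω = yt}) := by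
  have total_given_xp := sum_measure_inter_fiber_div_mul_div μ hY {ω | Yt ω = yt} {ω | Xp ω = xp}
  have total := sum_measure_inter_fiber_div_mul μ hY {ω | Yt ω = yt}
  have sum_filter_pos : ∑ y ∈ Finset.univ.filter (fun y : 𝒴 => 0 < μ {ω | Y ω = y}),
      μ ({ω | Yt ω = yt} ∩ {ω | Y ω = y}) / μ {ω | Y ω = y} * μ {ω | Y ω = y}
      = ∑ y, μ ({ω | Yt ω = yt} ∩ {ω | Y ω = y}) / μ {ω | Y ω = y} * μ {ω | Y ω = y} :=
    Finset.sum_filter_of_ne fun y _ hy => pos_iff_ne_zero.2 (right_ne_zero_of_mul hy)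
  refine ⟨total_given_xp, ?_, sum_filter_pos.trans total⟩
  rw [← total_given_xp, sum_filter_pos]
  exact Finset.sum_congr rfl fun y _ => measure_inter_div_mul_div_eq_of_cond_eq μ (h1 y) (h2 y)

/-- The chain of equalities
`ℙ(ỹ | xₚ) = Σ_y ℙ(ỹ | y ∩ xₚ)·ℙ(y | xₚ)` and
`ℙ(ỹ) = Σ_{y : ℙ(y) > 0} ℙ(ỹ | y)·ℙ(y)` with the two sums equal, constituting
the proof of Proposition 1 of the paper, for a fixed protected value `xp` of
positive probability and a fixed predicted label `yt`. -/
theorem total_probability_chain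
    {Ω 𝒴 𝒳p : Type*} [MeasurableSpace Ω]
    [Fintype 𝒴] [Nonempty 𝒴] [MeasurableSpace 𝒴] [MeasurableSingletonClass 𝒴]
    [Fintype 𝒳p] [Nonempty 𝒳p] [MeasurableSpace 𝒳p] [MeasurableSingletonClass 𝒳p]
    (μ : Measure Ω) [IsProbabilityMeasure μ]
    (Y Yt : Ω → 𝒴) (Xp : Ω → 𝒳p)
    (hY : Measurable Y) (hYt : Measurable Yt) (hXp : Measurable Xp)
    (xp : 𝒳p) (hxp : 0 < μ {ω | Xp ω = xp}) (yt : 𝒴)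
    -- (i) no disparate impact of the true labels
    (h1 : ∀ y : 𝒴,
      μ ({ω | Y ω = y} ∩ {ω | Xp ω = xp}) / μ {ω | Xp ω = xp} = μ {ω | Y ω = y})
    -- (ii) no disparate mistreatment of the classifier
    (h2 : ∀ y : 𝒴, 0 < μ ({ω | Y ω = y} ∩ {ω | Xp ω = xp}) →
      μ ({ω | Yt ω = yt} ∩ ({ω | Y ω = y} ∩ {ω | Xp ω = xp})) /
          μ ({ω | Y ω = y} ∩ {ω | Xp ω = xp})
        = μ ({ω | Yt ω = yt} ∩ {ω | Y ω = y}) / μ {ω | Y ω = y}) :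
    (∑ y : 𝒴,
        (μ ({ω | Yt ω = yt} ∩ ({ω | Y ω = y} ∩ {ω | Xp ω = xp})) /
            μ ({ω | Y ω = y} ∩ {ω | Xp ω = xp})) *
          (μ ({ω | Y ω = y} ∩ {ω | Xp ω = xp}) / μ {ω | Xp ω = xp})
      = μ ({ω | Yt ω = yt} ∩ {ω | Xp ω = xp}) / μ {ω | Xp ω = xp})
    ∧ (μ ({ω | Yt ω = yt} ∩ {ω | Xp ω = xp}) / μ {ω | Xp ω = xp}
      = ∑ y ∈ Finset.univ.filter (fun y : 𝒴 => 0 < μ {ω | Y ω = y}),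
          (μ ({ω | Yt ω = yt} ∩ {ω | Y ω = y}) / μ {ω | Y ω = y}) * μ {ω | Y ω = y})
    ∧ (∑ y ∈ Finset.univ.filter (fun y : 𝒴 => 0 < μ {ω | Y ω = y}),
          (μ ({ω | Yt ω = yt} ∩ {ω | Y ω = y}) / μ {ω | Y ω = y}) * μ {ω | Y ω = y}
      = μ {ω | Yt ω = yt}) :=
  total_probability_chain_general μ Y Yt Xp hY xp yt h1 h2
end
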